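/- Let B be a bicategory and W a class of 1-morphisms satisfying [WB1]–[WB5]. Let Ŵ be the smallest class containing W that is closed under composition and under invertible 2-cells. Then Ŵ satisfies the original bicategory-of-fractions conditions: it contains all identities, is closed under composition, admits squares with invertible fillers over cospans with one leg in Ŵ, admits liftings of 2-cells along arrows of Ŵ with the compatibility condition, and is closed under invertible 2-cells. -/

import Mathlib

open CategoryTheory Bicategory

universe w v u

/-- A class of 1-morphisms in a bicategory. -/
def WClass (B : Type u) [Bicategory.{w, v} B] :=
  ∀ ⦃a b : B⦄, (a ⟶ b) → Prop

namespace WClass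

variable {B : Type u} [Bicategory.{w, v} B]

/-- [WB1]: all identities are in `W`. -/
def WB1 (W : WClass B) : Prop := ∀ a : B, W (𝟙 a)

/-- [WB2]: for composable arrows of `W` there is a pre-composition landing in `W`. -/
def WB2 (W : WClass B) : Prop :=
  ∀ ⦃a b c : B⦄ (vm : a ⟶ b) (wm : b ⟶ c), W vm → W wm →
    ∃ (a' : B) (u : a' ⟶ a), W (u ≫ vm ≫ wm)

/-- [WB3]: squares with invertible fillers over cospans with one leg in `W`. -/
def WB3 (W : WClass B) : Prop :=
  ∀ ⦃a b c : B⦄ (wm : a ⟶ b) (f : c ⟶ b), W wm →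
    ∃ (d : B) (h : d ⟶ a) (vm : d ⟶ c), W vm ∧ Nonempty (h ≫ wm ≅ vm ≫ f)

/-- `β` is a lifting of the 2-cell `η : f ≫ wm ⟶ g ≫ wm` along `wm`, via `u`. -/
def IsLift ⦃a b c : B⦄ (f g : a ⟶ b) (wm : b ⟶ c) (η : f ≫ wm ⟶ g ≫ wm)
    ⦃a' : B⦄ (u : a' ⟶ a) (β : u ≫ f ⟶ u ≫ g) : Prop :=
  β ▷ wm = (α_ u f wm).hom ≫ u ◁ η ≫ (α_ u g wm).inv

/-- [WB4]: existence of liftings of 2-cells along arrows of `W`, together with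
the compatibility of any two such liftings. -/
def WB4 (W : WClass B) : Prop :=
  (∀ ⦃a b c : B⦄ (f g : a ⟶ b) (wm : b ⟶ c), W wm → ∀ η : f ≫ wm ⟶ g ≫ wm,
    ∃ (a' : B) (u : a' ⟶ a), W u ∧ ∃ β : u ≫ f ⟶ u ≫ g, IsLift f g wm η u β) ∧
  (∀ ⦃a b c : B⦄ (f g : a ⟶ b) (wm : b ⟶ c), W wm → ∀ η : f ≫ wm ⟶ g ≫ wm,
    ∀ ⦃a₁ : B⦄ (u₁ : a₁ ⟶ a) (β₁ : u₁ ≫ f ⟶ u₁ ≫ g), W u₁ → IsLift f g wm η u₁ β₁ →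
      ∀ ⦃a₂ : B⦄ (u₂ : a₂ ⟶ a) (β₂ : u₂ ≫ f ⟶ u₂ ≫ g), W u₂ → IsLift f g wm η u₂ β₂ →
        ∃ (d : B) (s : d ⟶ a₁) (t : d ⟶ a₂), W (s ≫ u₁) ∧ W (t ≫ u₂) ∧
          ∃ ε₀ : s ≫ u₁ ≅ t ≫ u₂,
            ((α_ s u₁ f).hom ≫ s ◁ β₁ ≫ (α_ s u₁ g).inv) ≫ ε₀.hom ▷ g =
              ε₀.hom ▷ f ≫ (α_ t u₂ f).hom ≫ t ◁ β₂ ≫ (α_ t u₂ g).inv)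

/-- [WB5]: `W` is closed under invertible 2-cells. -/
def WB5 (W : WClass B) : Prop :=
  ∀ ⦃a b : B⦄ (vm wm : a ⟶ b), W wm → Nonempty (vm ≅ wm) → W vm

end WClass

/-- The closure of a class of 1-morphisms under composition and invertible 2-cells. -/
inductive WClass.Hat {B : Type u} [Bicategory.{w, v} B] (W : WClass B) :
    ∀ ⦃a b : B⦄, (a ⟶ b) → Prop
  | of {a b : B} {f : a ⟶ b} : W f → WClass.Hat W f
  | comp {a b c : B} {f : a ⟶ b} {g : b ⟶ c} :
      WClass.Hat W f → WClass.Hat W g → WClass.Hat W (f ≫ g)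
  | iso {a b : B} {f g : a ⟶ b} : WClass.Hat W f → (g ≅ f) → WClass.Hat W g

/-- The closure `Ŵ` regarded as a class of 1-morphisms. -/
def WClass.hat {B : Type u} [Bicategory.{w, v} B] (W : WClass B) : WClass B :=
  fun _ _ f => WClass.Hat W f

/-!
Every arrow of `Ŵ` is built from arrows of `W` by composition and invertible 2-cells, so each
condition is proved by induction on that construction; squares and lifts along `w₁ ≫ w₂` are
obtained by first treating `w₂` and then `w₁`. For the compatibility of two lifts along `w ∈ Ŵ`,
complete their two arrows `u₁, u₂ ∈ Ŵ` to a square: the two induced 2-cells agree after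
whiskering with `w`, hence after precomposing with some arrow of `Ŵ`. This cancellation holds
for `w ∈ W` because `φ` and `ψ` with `φ ▷ w = ψ ▷ w` are two lifts of the same 2-cell along
the identity, and it passes to `Ŵ` by the same induction.
-/

namespace WClass

variable {B : Type u} [Bicategory.{w, v} B] {W : WClass B}

theorem WB1.hat (h1 : W.WB1) : W.hat.WB1 := fun a => .of (h1 a)

theorem hat_WB5 : W.hat.WB5 := fun _ _ _ _ hw ⟨e⟩ => .iso hw e

theorem WB3.hat (h3 : W.WB3) : W.hat.WB3 := by
  intro a b c wm f hw
  induction hw generalizing c with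
  | of hw =>
    obtain ⟨d, h, vm, hv, ⟨φ⟩⟩ := h3 _ f hw
    exact ⟨d, h, vm, .of hv, ⟨φ⟩⟩
  | comp _ _ ih₁ ih₂ =>
    obtain ⟨d₁, h₁, v₁, hv₁, ⟨φ⟩⟩ := ih₂ f
    obtain ⟨d₂, h₂, v₂, hv₂, ⟨ψ⟩⟩ := ih₁ h₁
    exact ⟨d₂, h₂, v₂ ≫ v₁, .comp hv₂ hv₁,
      ⟨(α_ _ _ _).symm ≪≫ whiskerRightIso ψ _ ≪≫ α_ _ _ _ ≪≫
        whiskerLeftIso v₂ φ ≪≫ (α_ _ _ _).symm⟩⟩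
  | iso _ e ih =>
    obtain ⟨d, h, vm, hv, ⟨φ⟩⟩ := ih f
    exact ⟨d, h, vm, hv, ⟨whiskerLeftIso h e ≪≫ φ⟩⟩

theorem IsLift.of_iso ⦃a b c : B⦄ {f g : a ⟶ b} {w w' : b ⟶ c} (e : w' ≅ w)
    {η : f ≫ w' ⟶ g ≫ w'} ⦃a' : B⦄ {u : a' ⟶ a} {β : u ≫ f ⟶ u ≫ g}
    (hβ : IsLift f g w (f ◁ e.inv ≫ η ≫ g ◁ e.hom) u β) : IsLift f g w' η u β := by
  unfold IsLift at hβ ⊢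
  rw [← cancel_mono ((u ≫ g) ◁ e.hom), ← whisker_exchange, hβ]
  simp

theorem IsLift.comp ⦃a b m c : B⦄ {f g : a ⟶ b} {w₁ : b ⟶ m} {w₂ : m ⟶ c}
    {η : f ≫ w₁ ≫ w₂ ⟶ g ≫ w₁ ≫ w₂} ⦃a' a'' : B⦄ {u : a' ⟶ a} {u' : a'' ⟶ a'}
    {β : u ≫ f ≫ w₁ ⟶ u ≫ g ≫ w₁} {γ : u' ≫ u ≫ f ⟶ u' ≫ u ≫ g}
    (hβ : IsLift (f ≫ w₁) (g ≫ w₁) w₂ ((α_ f w₁ w₂).hom ≫ η ≫ (α_ g w₁ w₂).inv) u β)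
    (hγ : IsLift (u ≫ f) (u ≫ g) w₁ ((α_ u f w₁).hom ≫ β ≫ (α_ u g w₁).inv) u' γ) :
    IsLift f g (w₁ ≫ w₂) η (u' ≫ u) ((α_ u' u f).hom ≫ γ ≫ (α_ u' u g).inv) := by
  unfold IsLift at hβ hγ ⊢
  simp only [comp_whiskerRight, Bicategory.whiskerRight_comp, whisker_assoc, hγ, hβ,
    Bicategory.whiskerLeft_comp, Category.assoc]
  bicategory

theorem IsLift.whiskerLeft ⦃a b c : B⦄ {f g : a ⟶ b} {w : b ⟶ c} {η : f ≫ w ⟶ g ≫ w}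
    ⦃a' : B⦄ {u : a' ⟶ a} {β : u ≫ f ⟶ u ≫ g} (hβ : IsLift f g w η u β) ⦃d : B⦄ (s : d ⟶ a') :
    IsLift f g w η (s ≫ u) ((α_ s u f).hom ≫ s ◁ β ≫ (α_ s u g).inv) := by
  unfold IsLift at hβ ⊢
  simp only [comp_whiskerRight, whisker_assoc, hβ, Bicategory.whiskerLeft_comp, Category.assoc]
  bicategory

/-- The existence half of [WB4]. -/
def LiftsExist (W : WClass B) : Prop :=
  ∀ ⦃a b c : B⦄ (f g : a ⟶ b) (wm : b ⟶ c), W wm → ∀ η : f ≫ wm ⟶ g ≫ wm,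
    ∃ (a' : B) (u : a' ⟶ a), W u ∧ ∃ β : u ≫ f ⟶ u ≫ g, IsLift f g wm η u β

theorem LiftsExist.hat (h4 : W.LiftsExist) : W.hat.LiftsExist := by
  intro a b c f g wm hw η
  induction hw generalizing a with
  | of hw =>
    obtain ⟨a', u, hu, β, hβ⟩ := h4 f g _ hw η
    exact ⟨a', u, .of hu, β, hβ⟩
  | @comp b m c w₁ w₂ _ _ ih₁ ih₂ =>
    obtain ⟨a', u, hu, β, hβ⟩ :=
      ih₂ (f ≫ w₁) (g ≫ w₁) ((α_ f w₁ w₂).hom ≫ η ≫ (α_ g w₁ w₂).inv)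
    obtain ⟨a'', u', hu', γ, hγ⟩ :=
      ih₁ (u ≫ f) (u ≫ g) ((α_ u f w₁).hom ≫ β ≫ (α_ u g w₁).inv)
    exact ⟨a'', u' ≫ u, .comp hu' hu, _, hβ.comp hγ⟩
  | iso _ e ih =>
    obtain ⟨a', u, hu, β, hβ⟩ := ih f g (f ◁ e.inv ≫ η ≫ g ◁ e.hom)
    exact ⟨a', u, hu, β, hβ.of_iso e⟩

/-- The compatibility half of [WB4]. -/
def LiftsCompatible (W : WClass B) : Prop :=
  ∀ ⦃a b c : B⦄ (f g : a ⟶ b) (wm : b ⟶ c), W wm → ∀ η : f ≫ wm ⟶ g ≫ wm,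
    ∀ ⦃a₁ : B⦄ (u₁ : a₁ ⟶ a) (β₁ : u₁ ≫ f ⟶ u₁ ≫ g), W u₁ → IsLift f g wm η u₁ β₁ →
      ∀ ⦃a₂ : B⦄ (u₂ : a₂ ⟶ a) (β₂ : u₂ ≫ f ⟶ u₂ ≫ g), W u₂ → IsLift f g wm η u₂ β₂ →
        ∃ (d : B) (s : d ⟶ a₁) (t : d ⟶ a₂), W (s ≫ u₁) ∧ W (t ≫ u₂) ∧
          ∃ ε₀ : s ≫ u₁ ≅ t ≫ u₂,
            ((α_ s u₁ f).hom ≫ s ◁ β₁ ≫ (α_ s u₁ g).inv) ≫ ε₀.hom ▷ g =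
              ε₀.hom ▷ f ≫ (α_ t u₂ f).hom ≫ t ◁ β₂ ≫ (α_ t u₂ g).inv

theorem LiftsCompatible.exists_whiskerLeft_eq (h1 : W.WB1) (h4 : W.LiftsCompatible)
    ⦃b c : B⦄ {wm : b ⟶ c} (hw : W wm) ⦃x : B⦄ {p q : x ⟶ b} {φ ψ : p ⟶ q}
    (hφψ : φ ▷ wm = ψ ▷ wm) : ∃ (x' : B) (r : x' ⟶ x), W r ∧ r ◁ φ = r ◁ ψ := by
  have lift_φ : IsLift p q wm (φ ▷ wm) (𝟙 x) (𝟙 x ◁ φ) := whisker_assoc _ _ _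
  have lift_ψ : IsLift p q wm (φ ▷ wm) (𝟙 x) (𝟙 x ◁ ψ) := hφψ ▸ whisker_assoc _ _ _
  obtain ⟨d, s, t, hs, -, e, he⟩ := h4 p q wm hw _ _ _ (h1 x) lift_φ _ _ (h1 x) lift_ψ
  refine ⟨d, s ≫ 𝟙 x, hs, (cancel_mono (e.hom ▷ q)).1 ?_⟩
  simp only [← comp_whiskerLeft] at he
  rw [he, whisker_exchange]

theorem LiftsCompatible.exists_hat_whiskerLeft_eq (h1 : W.WB1) (h4 : W.LiftsCompatible)
    ⦃b c : B⦄ {wm : b ⟶ c} (hw : W.hat wm) ⦃x : B⦄ {p q : x ⟶ b} {φ ψ : p ⟶ q}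
    (hφψ : φ ▷ wm = ψ ▷ wm) : ∃ (x' : B) (r : x' ⟶ x), W.hat r ∧ r ◁ φ = r ◁ ψ := by
  induction hw generalizing x with
  | of hw =>
    obtain ⟨x', r, hr, hrφψ⟩ := h4.exists_whiskerLeft_eq h1 hw hφψ
    exact ⟨x', r, .of hr, hrφψ⟩
  | @comp b m c w₁ w₂ _ _ ih₁ ih₂ =>
    simp only [Bicategory.whiskerRight_comp, cancel_epi, cancel_mono] at hφψ
    obtain ⟨x', r, hr, hrφψ⟩ := ih₂ hφψ
    obtain ⟨x'', r', hr', hr'φψ⟩ := ih₁ (φ := r ◁ φ) (ψ := r ◁ ψ) (by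
      rw [whisker_assoc, whisker_assoc, hrφψ])
    refine ⟨x'', r' ≫ r, .comp hr' hr, ?_⟩
    rw [comp_whiskerLeft, comp_whiskerLeft, hr'φψ]
  | iso _ e ih =>
    refine ih ((cancel_epi (p ◁ e.hom)).1 ?_)
    rw [whisker_exchange, hφψ, whisker_exchange]

theorem LiftsCompatible.hat (h1 : W.WB1) (h3 : W.WB3) (h4 : W.LiftsCompatible) :
    W.hat.LiftsCompatible := by
  intro a b c f g wm hwm η a₁ u₁ β₁ hu₁ l₁ a₂ u₂ β₂ hu₂ l₂
  obtain ⟨d, s, t, ht, ⟨ζ⟩⟩ := h3.hat u₁ u₂ hu₁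
  have hθ : (((α_ s u₁ f).hom ≫ s ◁ β₁ ≫ (α_ s u₁ g).inv) ≫ ζ.hom ▷ g) ▷ wm =
      (ζ.hom ▷ f ≫ (α_ t u₂ f).hom ≫ t ◁ β₂ ≫ (α_ t u₂ g).inv) ▷ wm := by
    rw [comp_whiskerRight _ (ζ.hom ▷ g), comp_whiskerRight (ζ.hom ▷ f), l₁.whiskerLeft s,
      l₂.whiskerLeft t]
    calc _ = (α_ (s ≫ u₁) f wm).hom ≫
            ((s ≫ u₁) ◁ η ≫ ζ.hom ▷ (g ≫ wm)) ≫ (α_ (t ≫ u₂) g wm).inv := by bicategory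
      _ = (α_ (s ≫ u₁) f wm).hom ≫
            (ζ.hom ▷ (f ≫ wm) ≫ (t ≫ u₂) ◁ η) ≫ (α_ (t ≫ u₂) g wm).inv := by
          rw [whisker_exchange]
      _ = _ := by bicategory
  obtain ⟨d', r, hr, hrθ⟩ := h4.exists_hat_whiskerLeft_eq h1 hwm hθ
  refine ⟨d', r ≫ s, r ≫ t, .iso (.comp hr (.iso (.comp ht hu₂) ζ)) (α_ r s u₁),
    .iso (.comp hr (.comp ht hu₂)) (α_ r t u₂),
    α_ r s u₁ ≪≫ whiskerLeftIso r ζ ≪≫ (α_ r t u₂).symm, ?_⟩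
  calc _ = ((α_ r s u₁).hom ▷ f ≫ (α_ r (s ≫ u₁) f).hom) ≫
          r ◁ (((α_ s u₁ f).hom ≫ s ◁ β₁ ≫ (α_ s u₁ g).inv) ≫ ζ.hom ▷ g) ≫
          ((α_ r (t ≫ u₂) g).inv ≫ (α_ r t u₂).inv ▷ g) := by
        simp only [Iso.trans_hom, Iso.symm_hom, whiskerLeftIso_hom, comp_whiskerRight,
          comp_whiskerLeft, whisker_assoc, Bicategory.whiskerLeft_comp, Category.assoc]
        bicategory
    _ = ((α_ r s u₁).hom ▷ f ≫ (α_ r (s ≫ u₁) f).hom) ≫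
          r ◁ (ζ.hom ▷ f ≫ (α_ t u₂ f).hom ≫ t ◁ β₂ ≫ (α_ t u₂ g).inv) ≫
          ((α_ r (t ≫ u₂) g).inv ≫ (α_ r t u₂).inv ▷ g) := by rw [hrθ]
    _ = _ := by
        simp only [Iso.trans_hom, Iso.symm_hom, whiskerLeftIso_hom, comp_whiskerRight,
          comp_whiskerLeft, whisker_assoc, Bicategory.whiskerLeft_comp, Category.assoc]
        bicategory

theorem WB4.hat (h1 : W.WB1) (h3 : W.WB3) (h4 : W.WB4) : W.hat.WB4 :=
  ⟨LiftsExist.hat h4.1, LiftsCompatible.hat h1 h3 h4.2⟩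

end WClass

theorem statement6_general {B : Type u} [Bicategory.{w, v} B] (W : WClass B)
    (h1 : W.WB1) (h3 : W.WB3) (h4 : W.WB4) :
    (W.hat).WB1 ∧
    (∀ ⦃a b c : B⦄ (f : a ⟶ b) (g : b ⟶ c), W.hat f → W.hat g → W.hat (f ≫ g)) ∧
    (W.hat).WB3 ∧ (W.hat).WB4 ∧ (W.hat).WB5 :=
  ⟨h1.hat, fun _ _ _ _ _ hf hg => .comp hf hg, h3.hat, h4.hat h1 h3, WClass.hat_WB5⟩

theorem statement6 {B : Type u} [Bicategory.{w, v} B] (W : WClass B)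
    (h1 : W.WB1) (h2 : W.WB2) (h3 : W.WB3) (h4 : W.WB4) (h5 : W.WB5) :
    (W.hat).WB1 ∧
    (∀ ⦃a b c : B⦄ (f : a ⟶ b) (g : b ⟶ c), W.hat f → W.hat g → W.hat (f ≫ g)) ∧
    (W.hat).WB3 ∧ (W.hat).WB4 ∧ (W.hat).WB5 :=
  statement6_general W h1 h3 h4
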